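/- Define J : ℝ → ℝ by J(s) = 6s² + 20s + 17 for s ≤ −2, J(s) = (s+1)⁴ for −2 < s < −1, J(s) = 0 for −1 ≤ s ≤ 1, J(s) = (s−1)⁴ for 1 < s < 2, and J(s) = 6s² − 20s + 17 for s ≥ 2, let F₀(s) = ½(1 − s²), and for n ∈ ℕ, n ≥ 1, set F_n := F₀ + n·J. Then F_n is twice continuously differentiable, F_n(s) = F₀(s) for all s ∈ [−1, 1], F_n(s) ≥ −3/2 for all s ∈ ℝ, and −1 ≤ F_n''(s) ≤ 12n − 1 for all s ∈ ℝ. -/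

import Mathlib

/-!
`J` is glued from polynomials at `±1, ±2` whose values and first two derivatives agree at the
junctions, so gluing one-sided derivatives twice yields `J'` and `J''` as the corresponding
piecewise polynomials. Then `J'' = 12 min(dist(s, [-1, 1]), 1)²` is continuous with values in
`[0, 12]`, which gives `F_n ∈ C²` and `F_n'' = -1 + n J'' ∈ [-1, 12n - 1]`. For the lower bound,
`J ≥ 0` and `n ≥ 1` reduce `F_n ≥ -3/2` to `F₀ + J ≥ -3/2`, checked piece by piece.
-/

open Set

/-- The piecewise-defined obstacle approximation function `J`. -/
noncomputable def obstacleApprox (s : ℝ) : ℝ :=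
  if s ≤ -2 then 6 * s ^ 2 + 20 * s + 17
  else if s < -1 then (s + 1) ^ 4
  else if s ≤ 1 then 0
  else if s < 2 then (s - 1) ^ 4
  else 6 * s ^ 2 - 20 * s + 17

section Gluing

variable {f g f' g' : ℝ → ℝ} {a : ℝ}

theorem ite_lt_eq_ite_le (h : f a = g a) (x : ℝ) :
    (if x < a then f x else g x) = if x ≤ a then f x else g x := by
  rcases lt_or_ge x a with hx | hx
  · simp [hx, hx.le]
  · rcases hx.eq_or_lt with rfl | hx
    · simp [h]
    · simp [hx.not_ge, hx.not_gt]

theorem continuous_ite_le (hf : Continuous f) (hg : Continuous g) (h : f a = g a) :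
    Continuous fun x => if x ≤ a then f x else g x :=
  hf.if_le hg continuous_id continuous_const fun _ hx => hx ▸ h

theorem continuous_ite_lt (hf : Continuous f) (hg : Continuous g) (h : f a = g a) :
    Continuous fun x => if x < a then f x else g x := by
  simpa only [ite_lt_eq_ite_le h] using continuous_ite_le hf hg h

theorem hasDerivAt_ite_le (hf : ∀ x ≤ a, HasDerivAt f (f' x) x)
    (hg : ∀ x ≥ a, HasDerivAt g (g' x) x) (h : f a = g a) (h' : f' a = g' a) (x : ℝ) :
    HasDerivAt (fun y => if y ≤ a then f y else g y) (if x ≤ a then f' x else g' x) x := by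
  rcases lt_trichotomy x a with hx | rfl | hx
  · rw [if_pos hx.le]
    refine (hf x hx.le).congr_of_eventuallyEq ?_
    filter_upwards [Iio_mem_nhds hx] with y hy using if_pos hy.le
  · rw [if_pos le_rfl]
    have hleft : HasDerivWithinAt (fun y => if y ≤ x then f y else g y) (f' x) (Iic x) x :=
      (hf x le_rfl).hasDerivWithinAt.congr (fun y hy => if_pos hy) (if_pos le_rfl)
    have hright : HasDerivWithinAt (fun y => if y ≤ x then f y else g y) (f' x) (Ici x) x := by
      refine h' ▸ (hg x le_rfl).hasDerivWithinAt.congr (fun y hy => ?_) (by simp [h])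
      rcases (mem_Ici.mp hy).eq_or_lt with rfl | hy
      · simp [h]
      · simp [hy.not_ge]
    exact (hleft.union hright).hasDerivAt (by simp)
  · rw [if_neg hx.not_ge]
    refine (hg x hx.le).congr_of_eventuallyEq ?_
    filter_upwards [Ioi_mem_nhds hx] with y hy using if_neg hy.not_ge

theorem hasDerivAt_ite_lt (hf : ∀ x ≤ a, HasDerivAt f (f' x) x)
    (hg : ∀ x ≥ a, HasDerivAt g (g' x) x) (h : f a = g a) (h' : f' a = g' a) (x : ℝ) :
    HasDerivAt (fun y => if y < a then f y else g y) (if x < a then f' x else g' x) x := by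
  simpa only [ite_lt_eq_ite_le h, ite_lt_eq_ite_le h'] using hasDerivAt_ite_le hf hg h h' x

theorem contDiff_two_of_hasDerivAt {f'' : ℝ → ℝ} (hf : ∀ x, HasDerivAt f (f' x) x)
    (hf' : ∀ x, HasDerivAt f' (f'' x) x) (hf'' : Continuous f'') : ContDiff ℝ 2 f := by
  have hderiv : deriv f = f' := funext fun x => (hf x).deriv
  have hderiv' : deriv f' = f'' := funext fun x => (hf' x).deriv
  rw [show (2 : WithTop ℕ∞) = 1 + 1 from rfl, contDiff_succ_iff_deriv, hderiv,
    contDiff_one_iff_deriv, hderiv']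
  exact ⟨fun x => (hf x).differentiableAt, by simp, fun x => (hf' x).differentiableAt, hf''⟩

end Gluing

noncomputable def obstacleApprox' (s : ℝ) : ℝ :=
  if s ≤ -2 then 12 * s + 20
  else if s < -1 then 4 * (s + 1) ^ 3
  else if s ≤ 1 then 0
  else if s < 2 then 4 * (s - 1) ^ 3
  else 12 * s - 20

noncomputable def obstacleApprox'' (s : ℝ) : ℝ :=
  if s ≤ -2 then 12
  else if s < -1 then 12 * (s + 1) ^ 2
  else if s ≤ 1 then 0
  else if s < 2 then 12 * (s - 1) ^ 2
  else 12

theorem hasDerivAt_obstacleApprox (x : ℝ) : HasDerivAt obstacleApprox (obstacleApprox' x) x := by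
  have hquad (b y : ℝ) : HasDerivAt (fun s : ℝ => 6 * s ^ 2 + b * s + 17) (12 * y + b) y :=
    ((((hasDerivAt_pow 2 y).const_mul 6).add ((hasDerivAt_id' y).const_mul b)).add_const
      17).congr_deriv (by ring)
  have hquartic (c y : ℝ) : HasDerivAt (fun s : ℝ => (s + c) ^ 4) (4 * (y + c) ^ 3) y := by
    simpa using (hasDerivAt_pow 4 (y + c)).comp_add_const y c
  unfold obstacleApprox obstacleApprox'
  apply hasDerivAt_ite_le ?_ ?_ (by norm_num) (by norm_num) x
  · exact fun y _ => hquad 20 y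
  intro y _
  apply hasDerivAt_ite_lt ?_ ?_ (by norm_num) (by norm_num) y
  · exact fun y _ => hquartic 1 y
  intro y _
  apply hasDerivAt_ite_le ?_ ?_ (by norm_num) (by norm_num) y
  · exact fun y _ => hasDerivAt_const y 0
  intro y _
  apply hasDerivAt_ite_lt ?_ ?_ (by norm_num) (by norm_num) y
  · simpa [sub_eq_add_neg] using fun y _ => hquartic (-1) y
  · simpa [sub_eq_add_neg] using fun y _ => hquad (-20) y

theorem hasDerivAt_obstacleApprox' (x : ℝ) :
    HasDerivAt obstacleApprox' (obstacleApprox'' x) x := by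
  have hlin (b y : ℝ) : HasDerivAt (fun s : ℝ => 12 * s + b) 12 y := by
    simpa using ((hasDerivAt_id' y).const_mul 12).add_const b
  have hcubic (c y : ℝ) : HasDerivAt (fun s : ℝ => 4 * (s + c) ^ 3) (12 * (y + c) ^ 2) y :=
    (((hasDerivAt_pow 3 (y + c)).comp_add_const y c).const_mul 4).congr_deriv (by ring)
  unfold obstacleApprox' obstacleApprox''
  apply hasDerivAt_ite_le ?_ ?_ (by norm_num) (by norm_num) x
  · exact fun y _ => hlin 20 y
  intro y _
  apply hasDerivAt_ite_lt ?_ ?_ (by norm_num) (by norm_num) y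
  · exact fun y _ => hcubic 1 y
  intro y _
  apply hasDerivAt_ite_le ?_ ?_ (by norm_num) (by norm_num) y
  · exact fun y _ => hasDerivAt_const y 0
  intro y _
  apply hasDerivAt_ite_lt ?_ ?_ (by norm_num) (by norm_num) y
  · simpa [sub_eq_add_neg] using fun y _ => hcubic (-1) y
  · simpa [sub_eq_add_neg] using fun y _ => hlin (-20) y

theorem continuous_obstacleApprox'' : Continuous obstacleApprox'' := by
  refine continuous_ite_le continuous_const ?_ (by norm_num)
  refine continuous_ite_lt (by fun_prop) ?_ (by norm_num)
  refine continuous_ite_le continuous_const ?_ (by norm_num)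
  exact continuous_ite_lt (by fun_prop) continuous_const (by norm_num)

theorem contDiff_obstacleApprox : ContDiff ℝ 2 obstacleApprox :=
  contDiff_two_of_hasDerivAt hasDerivAt_obstacleApprox hasDerivAt_obstacleApprox'
    continuous_obstacleApprox''

theorem obstacleApprox_eq_zero_of_mem_Icc {s : ℝ} (hs : s ∈ Icc (-1) 1) :
    obstacleApprox s = 0 := by
  obtain ⟨h₁, h₂⟩ := hs
  unfold obstacleApprox
  split_ifs <;> first | rfl | linarith

theorem obstacleApprox_nonneg (s : ℝ) : 0 ≤ obstacleApprox s := by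
  unfold obstacleApprox
  split_ifs <;> first | positivity | nlinarith

theorem obstacleApprox''_nonneg (s : ℝ) : 0 ≤ obstacleApprox'' s := by
  unfold obstacleApprox''
  split_ifs <;> positivity

theorem obstacleApprox''_le_twelve (s : ℝ) : obstacleApprox'' s ≤ 12 := by
  unfold obstacleApprox''
  split_ifs <;> nlinarith

theorem neg_three_halves_le_add_obstacleApprox (s : ℝ) :
    -(3 / 2) ≤ 1 / 2 * (1 - s ^ 2) + obstacleApprox s := by
  unfold obstacleApprox
  split_ifs <;> nlinarith [sq_nonneg (s - 20 / 11), sq_nonneg (s + 20 / 11)]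

/-- The approximating potentials `F_n = F₀ + nJ` (with `F₀(s) = ½(1-s²)`) are `C²`,
agree with `F₀` on `[-1,1]`, are bounded below by `-3/2`, and satisfy the two-sided
Hessian bound `-1 ≤ F_n'' ≤ 12n - 1`. -/
theorem approximating_potential_properties
    (n : ℕ) (hn : 1 ≤ n) (F₀ Fn : ℝ → ℝ)
    (hF₀ : ∀ s : ℝ, F₀ s = (1 / 2) * (1 - s ^ 2))
    (hFn : ∀ s : ℝ, Fn s = F₀ s + (n : ℝ) * obstacleApprox s) :
    ContDiff ℝ 2 Fn ∧
    (∀ s : ℝ, s ∈ Set.Icc (-1 : ℝ) 1 → Fn s = F₀ s) ∧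
    (∀ s : ℝ, -(3 / 2) ≤ Fn s) ∧
    (∀ s : ℝ, -1 ≤ deriv (deriv Fn) s ∧ deriv (deriv Fn) s ≤ 12 * (n : ℝ) - 1) := by
  have hFn_eq : Fn = fun s => 1 / 2 * (1 - s ^ 2) + n * obstacleApprox s :=
    funext fun s => by rw [hFn, hF₀]
  have hd₁ (x : ℝ) : HasDerivAt Fn (-x + n * obstacleApprox' x) x := by
    rw [hFn_eq]
    exact ((((hasDerivAt_pow 2 x).const_sub 1).const_mul (1 / 2)).add
      ((hasDerivAt_obstacleApprox x).const_mul _)).congr_deriv (by ring)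
  have hd₂ (x : ℝ) : HasDerivAt (deriv Fn) (-1 + n * obstacleApprox'' x) x := by
    rw [show deriv Fn = _ from funext fun x => (hd₁ x).deriv]
    exact (hasDerivAt_neg' x).add ((hasDerivAt_obstacleApprox' x).const_mul _)
  have hn' : (1 : ℝ) ≤ n := by exact_mod_cast hn
  refine ⟨?_, fun s hs => ?_, fun s => ?_, fun s => ?_⟩
  · have := contDiff_obstacleApprox
    rw [hFn_eq]
    fun_prop
  · rw [hFn, obstacleApprox_eq_zero_of_mem_Icc hs, mul_zero, add_zero]
  · rw [hFn, hF₀]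
    linarith [neg_three_halves_le_add_obstacleApprox s,
      le_mul_of_one_le_left (obstacleApprox_nonneg s) hn']
  · rw [(hd₂ s).deriv]
    constructor <;> nlinarith [obstacleApprox''_nonneg s, obstacleApprox''_le_twelve s]
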